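/- Let G be a signed graph with signed Laplacian L = K − A⁺ + A⁻ and unsigned Laplacian L̄ = K − A⁺ − A⁻, and let ℒ = [[K − A⁺, −A⁻],[−A⁻, K − A⁺]] be the Laplacian of the Gremban expansion. Then ℒ is similar to L̄ ⊕ L and spec(ℒ) = spec(L̄) ∪ spec(L); every eigenpair (λ, x) of L lifts to the antisymmetric eigenpair (λ, (x, −x)ᵀ) of ℒ and every eigenpair (μ, y) of L̄ lifts to the symmetric eigenpair (μ, (y, y)ᵀ) of ℒ. -/

import Mathlib

/-- A signed graph: a simple graph together with a symmetric `±1`-valued sign function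
on its edges. -/
structure SignedGraph (V : Type*) where
  G : SimpleGraph V
  sign : V → V → ℤ
  sign_symm : ∀ u v, sign u v = sign v u
  sign_pm : ∀ u v, G.Adj u v → sign u v = 1 ∨ sign u v = -1

namespace SignedGraph

variable {V : Type*} (S : SignedGraph V)

/-- The Gremban expansion of a signed graph: each vertex `v` is doubled into the two
polarities `(v, true)` (positive) and `(v, false)` (negative); a positive edge lifts to
two edges between equal polarities, and a negative edge to two edges between opposite
polarities. -/
def gremban : SimpleGraph (V × Bool) where
  Adj x y := S.G.Adj x.1 y.1 ∧ ((x.2 = y.2) ↔ S.sign x.1 y.1 = 1)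
  symm := by
    refine ⟨?_⟩
    rintro ⟨u, a⟩ ⟨v, b⟩ ⟨h, hs⟩
    refine ⟨h.symm, ?_⟩
    rw [S.sign_symm v u, eq_comm]
    exact hs
  loopless := by
    refine ⟨?_⟩
    rintro ⟨u, a⟩ ⟨h, _⟩
    exact S.G.loopless.irrefl u h

/-- The Gremban involution, swapping the two polarities of every vertex. -/
def eta : V × Bool → V × Bool := fun x => (x.1, !x.2)

end SignedGraph

open SignedGraph

namespace SignedGraph

variable {V : Type*} [Fintype V] [DecidableEq V]

open Classical in
/-- The signed adjacency matrix of a signed graph. -/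
noncomputable def adjMat (S : SignedGraph V) : Matrix V V ℝ :=
  fun u v => if S.G.Adj u v then (S.sign u v : ℝ) else 0

/-- The positive part `A⁺ = max(A, 0)` of the signed adjacency matrix. -/
noncomputable def adjPos (S : SignedGraph V) : Matrix V V ℝ :=
  fun u v => max (S.adjMat u v) 0

/-- The negative part `A⁻ = max(−A, 0)` of the signed adjacency matrix. -/
noncomputable def adjNeg (S : SignedGraph V) : Matrix V V ℝ :=
  fun u v => max (-S.adjMat u v) 0

/-- The Gremban adjacency matrix `𝒜 = [[A⁺, A⁻],[A⁻, A⁺]]`, which is the adjacency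
matrix of the Gremban expansion. -/
noncomputable def grembanAdj (S : SignedGraph V) : Matrix (V ⊕ V) (V ⊕ V) ℝ :=
  Matrix.fromBlocks (S.adjPos) (S.adjNeg) (S.adjNeg) (S.adjPos)

/-- A signed graph is balanced if some switching function `θ : V → {±1}` makes all edge
signs positive. -/
def BalancedSw (S : SignedGraph V) : Prop :=
  ∃ θ : V → ℤ, (∀ v, θ v = 1 ∨ θ v = -1) ∧
    ∀ u v, S.G.Adj u v → θ u * θ v * S.sign u v = 1

end SignedGraph

namespace SignedGraph

variable {V : Type*} [Fintype V] [DecidableEq V]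

/-- The degree matrix `K` of a signed graph: the diagonal matrix of (unsigned)
degrees, i.e. row sums of `Ā = A⁺ + A⁻`. -/
noncomputable def degMat (S : SignedGraph V) : Matrix V V ℝ :=
  Matrix.diagonal fun v => ∑ w, (S.adjPos v w + S.adjNeg v w)

/-- The signed Laplacian `L = K − A⁺ + A⁻`. -/
noncomputable def signedLap (S : SignedGraph V) : Matrix V V ℝ :=
  S.degMat - S.adjPos + S.adjNeg

/-- The unsigned Laplacian `L̄ = K − A⁺ − A⁻`. -/
noncomputable def unsignedLap (S : SignedGraph V) : Matrix V V ℝ :=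
  S.degMat - S.adjPos - S.adjNeg

/-- The Gremban Laplacian `ℒ = [[K − A⁺, −A⁻],[−A⁻, K − A⁺]]`, the Laplacian matrix of
the Gremban expansion. -/
noncomputable def grembanLap (S : SignedGraph V) : Matrix (V ⊕ V) (V ⊕ V) ℝ :=
  Matrix.fromBlocks (S.degMat - S.adjPos) (-S.adjNeg) (-S.adjNeg) (S.degMat - S.adjPos)

end SignedGraph

/-!
With `D = K − A⁺` and `N = A⁻` the Gremban Laplacian is `[[D, −N], [−N, D]]`, while
`L̄ = D − N` and `L = D + N`. The block Hadamard matrix `H = [[1, 1], [1, −1]]` satisfies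
`H² = 2` and intertwines `ℒ H = H (L̄ ⊕ L)`, so `ℒ` is similar to `L̄ ⊕ L`. Since
`H (y, 0) = (y, y)` and `H (0, x) = (x, −x)`, the intertwining also carries the eigenvectors of
`L̄ ⊕ L` to the symmetric and antisymmetric eigenvectors of `ℒ`.
-/

namespace Matrix

variable {n R : Type*} [Fintype n] [CommRing R]

theorem mulVec_mulVec_eq_smul_of_mul_eq_mul {A U B : Matrix n n R} (hAUB : A * U = U * B)
    {c : R} {v : n → R} (hv : B *ᵥ v = c • v) : A *ᵥ (U *ᵥ v) = c • (U *ᵥ v) := by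
  rw [mulVec_mulVec, hAUB, ← mulVec_mulVec, hv, mulVec_smul]

variable [DecidableEq n]

theorem charpoly_mul_mul_inv_of_isUnit_det (U B : Matrix n n R) (hU : IsUnit U.det) :
    (U * B * U⁻¹).charpoly = B.charpoly := by
  rw [charpoly_mul_comm, ← Matrix.mul_assoc, nonsing_inv_mul U hU, Matrix.one_mul]

variable (n R) in
def hadamardBlock : Matrix (n ⊕ n) (n ⊕ n) R :=
  fromBlocks 1 1 1 (-1)

theorem hadamardBlock_mul_self : hadamardBlock n R * hadamardBlock n R = (2 : R) • 1 := by
  rw [hadamardBlock, fromBlocks_multiply, ← fromBlocks_one, fromBlocks_smul]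
  simp only [Matrix.mul_one, Matrix.mul_neg, neg_neg, add_neg_cancel, smul_zero,
    two_smul]

theorem isUnit_det_hadamardBlock (h2 : IsUnit (2 : R)) : IsUnit (hadamardBlock n R).det := by
  have hsq : (hadamardBlock n R).det * (hadamardBlock n R).det = 2 ^ Fintype.card (n ⊕ n) := by
    rw [← det_mul, hadamardBlock_mul_self, det_smul, det_one, mul_one]
  exact isUnit_of_mul_isUnit_left (hsq ▸ h2.pow _)

theorem hadamardBlock_mulVec (a b : n → R) :
    hadamardBlock n R *ᵥ Sum.elim a b = Sum.elim (a + b) (a - b) := by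
  simp [hadamardBlock, fromBlocks_mulVec, neg_mulVec, sub_eq_add_neg]

theorem fromBlocks_neg_mul_hadamardBlock (D N : Matrix n n R) :
    fromBlocks D (-N) (-N) D * hadamardBlock n R =
      hadamardBlock n R * fromBlocks (D - N) 0 0 (D + N) := by
  rw [hadamardBlock, fromBlocks_multiply, fromBlocks_multiply]
  congr 1 <;> noncomm_ring

end Matrix

namespace SignedGraph

open Matrix

variable {V : Type*} [Fintype V] [DecidableEq V]

theorem grembanLap_mul_hadamardBlock (S : SignedGraph V) :
    S.grembanLap * hadamardBlock V ℝ =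
      hadamardBlock V ℝ * fromBlocks S.unsignedLap 0 0 S.signedLap :=
  fromBlocks_neg_mul_hadamardBlock _ _

end SignedGraph

open Matrix in
/-- The Gremban Laplacian `ℒ` of a signed graph is similar to `L̄ ⊕ L` (block diagonal
with the unsigned and signed Laplacians), so `spec(ℒ) = spec(L̄) ∪ spec(L)` (the
characteristic polynomial factors); every eigenpair `(λ, x)` of `L` lifts to the
antisymmetric eigenpair `(λ, (x, −x)ᵀ)` of `ℒ` and every eigenpair `(μ, y)` of `L̄`
lifts to the symmetric eigenpair `(μ, (y, y)ᵀ)`. -/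
theorem gremban_laplacian_spectral {V : Type*} [Fintype V] [DecidableEq V]
    (S : SignedGraph V) :
    (∃ U : Matrix (V ⊕ V) (V ⊕ V) ℝ, IsUnit U.det ∧
      S.grembanLap = U * Matrix.fromBlocks S.unsignedLap 0 0 S.signedLap * U⁻¹) ∧
    (S.grembanLap).charpoly = (S.unsignedLap).charpoly * (S.signedLap).charpoly ∧
    (∀ (lam : ℝ) (x : V → ℝ), S.signedLap.mulVec x = lam • x →
      S.grembanLap.mulVec (Sum.elim x (-x)) = lam • Sum.elim x (-x)) ∧
    (∀ (mu : ℝ) (y : V → ℝ), S.unsignedLap.mulVec y = mu • y →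
      S.grembanLap.mulVec (Sum.elim y y) = mu • Sum.elim y y) := by
  have hH : IsUnit (hadamardBlock V ℝ).det := isUnit_det_hadamardBlock two_ne_zero.isUnit
  have := (hadamardBlock V ℝ).invertibleOfIsUnitDet hH
  have hsim : S.grembanLap =
      hadamardBlock V ℝ * fromBlocks S.unsignedLap 0 0 S.signedLap * (hadamardBlock V ℝ)⁻¹ :=
    ((mul_inv_eq_iff_eq_mul_of_invertible _ _ _).mpr
      S.grembanLap_mul_hadamardBlock.symm).symm
  refine ⟨⟨_, hH, hsim⟩, ?_, fun lam x hx => ?_, fun mu y hy => ?_⟩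
  · rw [hsim, charpoly_mul_mul_inv_of_isUnit_det _ _ hH, charpoly_fromBlocks_zero₂₁]
  · have := mulVec_mulVec_eq_smul_of_mul_eq_mul S.grembanLap_mul_hadamardBlock
      (c := lam) (v := Sum.elim 0 x) (by ext (i | i) <;> simp [fromBlocks_mulVec, hx])
    simpa [hadamardBlock_mulVec] using this
  · have := mulVec_mulVec_eq_smul_of_mul_eq_mul S.grembanLap_mul_hadamardBlock
      (c := mu) (v := Sum.elim y 0) (by ext (i | i) <;> simp [fromBlocks_mulVec, hy])
    simpa [hadamardBlock_mulVec] using this
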